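/- arXiv:2108.01108 — 4 statements merged into one kernel-verified Lean document; each statement's English description precedes it below -/
import Mathlib

section
/- Let (P, L) be a linear system, let p ∈ P with deg(p) = Δ the maximum degree, and let Δ′ = max{deg(x) : x ∈ P \ {p}}. If |L| ≤ Δ + Δ′ + ν₂ − 3, where ν₂ is the 2-packing number, then τ ≤ ν₂ − 1. -/
open Finset

variable {P : Type*} [Fintype P] [DecidableEq P]

/-- `T` is a transversal of the set system `L`: it meets every member of `L`. -/
def IsTransversal (L : Finset (Finset P)) (T : Finset P) : Prop :=
  ∀ ℓ ∈ L, (T ∩ ℓ).Nonempty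

/-- The transversal number τ: minimum size of a transversal. -/
noncomputable def tau (L : Finset (Finset P)) : ℕ :=
  sInf {n | ∃ T : Finset P, T.card = n ∧ IsTransversal L T}

/-- `M` is a matching of `L`: a pairwise disjoint subfamily. -/
def IsMatching (L M : Finset (Finset P)) : Prop :=
  M ⊆ L ∧ ∀ a ∈ M, ∀ b ∈ M, a ≠ b → a ∩ b = ∅

/-- The matching number ν: maximum size of a matching. -/
noncomputable def matchingNumber (L : Finset (Finset P)) : ℕ :=
  sSup {n | ∃ M : Finset (Finset P), IsMatching L M ∧ M.card = n}

/-- `R` is a 2-packing of `L`: no three distinct members share a common point. -/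
def IsTwoPacking (L R : Finset (Finset P)) : Prop :=
  R ⊆ L ∧ ∀ a ∈ R, ∀ b ∈ R, ∀ c ∈ R, a ≠ b → a ≠ c → b ≠ c → a ∩ b ∩ c = ∅

/-- The 2-packing number ν₂. -/
noncomputable def nu2 (L : Finset (Finset P)) : ℕ :=
  sSup {n | ∃ R : Finset (Finset P), IsTwoPacking L R ∧ R.card = n}

/-- A linear system: two distinct lines share at most one point. -/
def Linear (L : Finset (Finset P)) : Prop :=
  ∀ a ∈ L, ∀ b ∈ L, a ≠ b → (a ∩ b).card ≤ 1

/-- Intersecting: every two lines meet. -/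
def Intersecting (L : Finset (Finset P)) : Prop :=
  ∀ a ∈ L, ∀ b ∈ L, (a ∩ b).Nonempty

/-- `r`-uniform: every line has exactly `r` points. -/
def Uniform (L : Finset (Finset P)) (r : ℕ) : Prop :=
  ∀ ℓ ∈ L, ℓ.card = r

/-- `r`-partite: the points partition into `r` sides, each meeting every line exactly once. -/
def Partite (L : Finset (Finset P)) (r : ℕ) : Prop :=
  ∃ X : Fin r → Finset P, (∀ p : P, ∃! i, p ∈ X i) ∧
    ∀ ℓ ∈ L, ∀ i, (ℓ ∩ X i).card = 1

/-- The degree of a point: the number of lines through it. -/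
def deg (L : Finset (Finset P)) (p : P) : ℕ :=
  (L.filter (fun ℓ => p ∈ ℓ)).card

/-!
Let `q ≠ p` have degree `Δ'` and let `R` be the set of the `k` lines missing both `p` and `q`.
Counting lines through `p` or `q` gives `|L| + e = Δ + Δ' + k`, where `e ≤ 1` is the number of
lines through both points, so the hypothesis reads `k + 3 ≤ ν₂ + e`. The points `p`, `q` together
with one point on each line of `R` always form a transversal of size `k + 2`; this settles `e = 0`.
If `e = 1`, with `ℓ₀` the line through `p` and `q`, it suffices to save one point or to find a
2-packing of size `k + 3`. One point can be saved if two lines of `R` meet, if every line through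
`q` passes through `p`, or if for some line `b` through `q` but not `p` every line through `p` but
not `q` meets `b` on a line of `R`: then `q` and these points of `b` cover everything except the
lines of `R` missing them, and by linearity the lines of `R` through them are at least as many as
the points. Otherwise there are lines `a ∋ p` and `b ∋ q` whose common points lie on no line of
`R`, and the lines of `R` are pairwise disjoint, so `{ℓ₀, a, b} ∪ R` is a 2-packing.
-/

section

variable {α : Type*} [DecidableEq α]

theorem tau_le_card {L : Finset (Finset α)} {T : Finset α} (h : IsTransversal L T) :
    tau L ≤ T.card :=
  Nat.sInf_le ⟨T, rfl, h⟩

-- There is no transversal at all, and `sInf ∅ = 0`.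
theorem tau_eq_zero_of_empty_mem {L : Finset (Finset α)} (h : ∅ ∈ L) : tau L = 0 := by
  rw [tau, Nat.sInf_eq_zero]
  refine Or.inr (Set.eq_empty_of_forall_notMem fun n ⟨T, _, hT⟩ => ?_)
  simpa using hT ∅ h

theorem tau_le_card_add_card {L R : Finset (Finset α)} {T : Finset α}
    (hT : ∀ ℓ ∈ L, ℓ ∉ R → (T ∩ ℓ).Nonempty) : tau L ≤ T.card + R.card := by
  induction R using Finset.induction_on generalizing T with
  | empty => simpa using tau_le_card fun ℓ hℓ => hT ℓ hℓ (notMem_empty ℓ)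
  | insert r R hrR ih =>
    rw [card_insert_of_notMem hrR]
    obtain rfl | ⟨x, hx⟩ := r.eq_empty_or_nonempty
    · by_cases hL : ∅ ∈ L
      · simp [tau_eq_zero_of_empty_mem hL]
      · refine (ih (T := T) fun ℓ hℓ hℓR => hT ℓ hℓ ?_).trans (by omega)
        simpa [hℓR] using ne_of_mem_of_not_mem hℓ hL
    · refine (ih (T := insert x T) fun ℓ hℓ hℓR => ?_).trans (by have := card_insert_le x T; omega)
      by_cases hℓr : ℓ = r
      · exact ⟨x, by simp [hℓr, hx]⟩
      · exact (hT ℓ hℓ (by simp [hℓr, hℓR])).mono (inter_subset_inter_right (subset_insert x T))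

theorem IsTwoPacking.card_le_nu2 {L R : Finset (Finset α)} (h : IsTwoPacking L R) :
    R.card ≤ nu2 L :=
  le_csSup ⟨L.card, by rintro n ⟨M, hM, rfl⟩; exact card_le_card hM.1⟩ ⟨R, h, rfl⟩

theorem isTwoPacking_iff_card_filter_le_two {L R : Finset (Finset α)} :
    IsTwoPacking L R ↔ R ⊆ L ∧ ∀ x, (R.filter (x ∈ ·)).card ≤ 2 := by
  refine and_congr_right fun _ => ⟨fun h x => ?_, fun h a ha b hb c hc hab hac hbc => ?_⟩
  · by_contra! hx
    obtain ⟨a, ha, b, hb, c, hc, hab, hac, hbc⟩ := two_lt_card.1 hx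
    simp only [mem_filter] at ha hb hc
    exact notMem_empty x (h a ha.1 b hb.1 c hc.1 hab hac hbc ▸ by simp [ha.2, hb.2, hc.2])
  · refine eq_empty_of_forall_notMem fun x hx => ?_
    simp only [mem_inter] at hx
    have hsub : ({a, b, c} : Finset (Finset α)) ⊆ R.filter (x ∈ ·) := by
      simp [insert_subset_iff, ha, hb, hc, hx]
    have := card_le_card hsub
    rw [card_eq_three.2 ⟨a, b, c, hab, hac, hbc, rfl⟩] at this
    have := h x
    omega

theorem IsMatching.card_filter_le_one {L M : Finset (Finset α)} (hM : IsMatching L M) (x : α) :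
    (M.filter (x ∈ ·)).card ≤ 1 :=
  card_le_one.2 fun a ha b hb => by_contra fun hab => by
    simp only [mem_filter] at ha hb
    exact notMem_empty x (hM.2 a ha.1 b hb.1 hab ▸ mem_inter.2 ⟨ha.2, hb.2⟩)

theorem IsTwoPacking.union_of_isMatching {L X M : Finset (Finset α)} (hX : IsTwoPacking L X)
    (hM : IsMatching L M) (hXM : Disjoint X M)
    (h : ∀ u ∈ X, ∀ v ∈ X, u ≠ v → ∀ x ∈ u, x ∈ v → ∀ r ∈ M, x ∉ r) :
    IsTwoPacking L (X ∪ M) := by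
  rw [isTwoPacking_iff_card_filter_le_two] at hX ⊢
  refine ⟨union_subset hX.1 hM.1, fun x => ?_⟩
  rw [filter_union, card_union_of_disjoint (disjoint_filter_filter hXM)]
  have hXx := hX.2 x
  have hMx := hM.card_filter_le_one x
  by_cases h2 : 2 ≤ (X.filter (x ∈ ·)).card
  · obtain ⟨u, hu, v, hv, huv⟩ := one_lt_card.1 h2
    simp only [mem_filter] at hu hv
    have : M.filter (x ∈ ·) = ∅ :=
      filter_eq_empty_iff.2 fun r hr => h u hu.1 v hv.1 huv x hu.2 hv.2 r hr
    rw [this, card_empty]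
    omega
  · omega

theorem isTwoPacking_triple {L : Finset (Finset α)} {u v w : Finset α} (hu : u ∈ L) (hv : v ∈ L)
    (hw : w ∈ L) (h : u ∩ v ∩ w = ∅) : IsTwoPacking L {u, v, w} := by
  rw [isTwoPacking_iff_card_filter_le_two]
  refine ⟨by simp [insert_subset_iff, hu, hv, hw], fun x => ?_⟩
  by_contra! hx
  have hall := filter_eq_self.1 <|
    eq_of_subset_of_card_le (filter_subset (x ∈ ·) {u, v, w}) (card_le_three.trans hx)
  exact notMem_empty x (h ▸ by simp [hall])

theorem Linear.eq_of_mem_of_mem {L : Finset (Finset α)} (hlin : Linear L) {a b : Finset α}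
    {x y : α} (ha : a ∈ L) (hb : b ∈ L) (hab : a ≠ b) (hxa : x ∈ a) (hxb : x ∈ b) (hya : y ∈ a)
    (hyb : y ∈ b) : x = y :=
  card_le_one.1 (hlin a ha b hb hab) x (mem_inter.2 ⟨hxa, hxb⟩) y (mem_inter.2 ⟨hya, hyb⟩)

theorem Linear.card_filter_mem_mem_le_one {L : Finset (Finset α)} (hlin : Linear L) {p q : α}
    (hpq : p ≠ q) : (L.filter fun ℓ => p ∈ ℓ ∧ q ∈ ℓ).card ≤ 1 :=
  card_le_one.2 fun a ha b hb => by_contra fun hab => by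
    simp only [mem_filter] at ha hb
    exact hpq (hlin.eq_of_mem_of_mem ha.1 hb.1 hab ha.2.1 hb.2.1 ha.2.2 hb.2.2)

def linesAvoiding (L : Finset (Finset α)) (p q : α) : Finset (Finset α) :=
  L.filter fun ℓ => p ∉ ℓ ∧ q ∉ ℓ

section LinesAvoiding

variable {L : Finset (Finset α)} {p q : α}

@[simp]
theorem mem_linesAvoiding {ℓ : Finset α} : ℓ ∈ linesAvoiding L p q ↔ ℓ ∈ L ∧ p ∉ ℓ ∧ q ∉ ℓ :=
  mem_filter

theorem card_add_card_filter_mem_mem (L : Finset (Finset α)) (p q : α) :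
    L.card + (L.filter fun ℓ => p ∈ ℓ ∧ q ∈ ℓ).card
      = deg L p + deg L q + (linesAvoiding L p q).card := by
  have hunion := card_union_add_card_inter (L.filter (p ∈ ·)) (L.filter (q ∈ ·))
  have hsplit := card_filter_add_card_filter_not (s := L) fun ℓ => p ∈ ℓ ∨ q ∈ ℓ
  rw [← filter_or, ← filter_and] at hunion
  simp only [not_or] at hsplit
  rw [deg, deg, linesAvoiding]
  omega

theorem tau_le_card_add_card_linesAvoiding {T : Finset α}
    (hT : ∀ ℓ ∈ L, p ∈ ℓ ∨ q ∈ ℓ → (T ∩ ℓ).Nonempty) :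
    tau L ≤ T.card + (linesAvoiding L p q).card :=
  tau_le_card_add_card fun ℓ hℓ hℓR => hT ℓ hℓ (by simpa [hℓ, or_iff_not_imp_left] using hℓR)

theorem tau_le_card_linesAvoiding_add_two : tau L ≤ (linesAvoiding L p q).card + 2 :=
  calc tau L ≤ ({p, q} : Finset α).card + (linesAvoiding L p q).card :=
        tau_le_card_add_card_linesAvoiding fun ℓ _ h =>
          h.elim (fun hp => ⟨p, by simp [hp]⟩) (fun hq => ⟨q, by simp [hq]⟩)
    _ ≤ (linesAvoiding L p q).card + 2 := by have := card_le_two (a := p) (b := q); omega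

theorem tau_le_card_linesAvoiding_add_one_of_forall_mem_imp (h : ∀ ℓ ∈ L, q ∈ ℓ → p ∈ ℓ) :
    tau L ≤ (linesAvoiding L p q).card + 1 :=
  calc tau L ≤ ({p} : Finset α).card + (linesAvoiding L p q).card :=
        tau_le_card_add_card_linesAvoiding fun ℓ hℓ hpq =>
          ⟨p, by simp [hpq.elim id (h ℓ hℓ)]⟩
    _ = (linesAvoiding L p q).card + 1 := by rw [card_singleton, add_comm]

theorem tau_le_card_linesAvoiding_add_one_of_mem_of_mem {r r' : Finset α} {x : α}
    (hr : r ∈ linesAvoiding L p q) (hr' : r' ∈ linesAvoiding L p q) (hrr' : r ≠ r')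
    (hxr : x ∈ r) (hxr' : x ∈ r') : tau L ≤ (linesAvoiding L p q).card + 1 := by
  have hsub : {r, r'} ⊆ linesAvoiding L p q := insert_subset hr (singleton_subset_iff.2 hr')
  have hcard := card_le_card hsub
  rw [card_pair hrr'] at hcard
  calc tau L ≤ ({p, q, x} : Finset α).card + (linesAvoiding L p q \ {r, r'}).card :=
        tau_le_card_add_card fun ℓ hℓ hℓR => ?_
    _ ≤ 3 + ((linesAvoiding L p q).card - 2) := by
        rw [card_sdiff_of_subset hsub, card_pair hrr']
        exact Nat.add_le_add_right card_le_three _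
    _ = (linesAvoiding L p q).card + 1 := by omega
  simp only [mem_sdiff, mem_linesAvoiding, mem_insert, mem_singleton, not_and, not_not] at hℓR
  by_cases hp : p ∈ ℓ
  · exact ⟨p, by simp [hp]⟩
  by_cases hq : q ∈ ℓ
  · exact ⟨q, by simp [hq]⟩
  obtain rfl | rfl := hℓR ⟨hℓ, hp, hq⟩
  · exact ⟨x, by simp [hxr]⟩
  · exact ⟨x, by simp [hxr']⟩

theorem Linear.tau_le_card_linesAvoiding_add_one_of_forall_exists (hlin : Linear L)
    {b : Finset α} (hb : b ∈ L) (hqb : q ∈ b)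
    (h : ∀ a ∈ L, p ∈ a → q ∉ a → ∃ x ∈ a, x ∈ b ∧ ∃ r ∈ linesAvoiding L p q, x ∈ r) :
    tau L ≤ (linesAvoiding L p q).card + 1 := by
  set R := linesAvoiding L p q
  set S := b.filter fun x => ∃ r ∈ R, x ∈ r
  have hS : S.card ≤ (R.filter fun r => (S ∩ r).Nonempty).card := by
    refine card_le_card_of_forall_subsingleton (· ∈ ·) (fun x hx => ?_) (fun r hr => ?_)
    · obtain ⟨r, hr, hxr⟩ := (mem_filter.1 hx).2
      exact ⟨r, mem_filter.2 ⟨hr, x, mem_inter.2 ⟨hx, hxr⟩⟩, hxr⟩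
    · obtain ⟨hrL, -, hqr⟩ := mem_linesAvoiding.1 (mem_filter.1 hr).1
      rintro x ⟨hxS, hxr⟩ y ⟨hyS, hyr⟩
      exact hlin.eq_of_mem_of_mem hb hrL (ne_of_mem_of_not_mem' hqb hqr) (mem_filter.1 hxS).1
        hxr (mem_filter.1 hyS).1 hyr
  have hsplit := card_filter_add_card_filter_not (s := R) fun r => (S ∩ r).Nonempty
  calc tau L ≤ (insert q S).card + (R.filter fun r => ¬(S ∩ r).Nonempty).card :=
        tau_le_card_add_card fun ℓ hℓ hℓR => ?_
    _ ≤ R.card + 1 := by have := card_insert_le q S; omega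
  by_cases hq : q ∈ ℓ
  · exact ⟨q, by simp [hq]⟩
  by_cases hp : p ∈ ℓ
  · obtain ⟨x, hxℓ, hxb, hxR⟩ := h ℓ hℓ hp hq
    exact ⟨x, mem_inter.2 ⟨mem_insert_of_mem (mem_filter.2 ⟨hxb, hxR⟩), hxℓ⟩⟩
  · obtain ⟨x, hx⟩ := not_not.1 fun hSℓ =>
      hℓR (mem_filter.2 ⟨mem_linesAvoiding.2 ⟨hℓ, hp, hq⟩, hSℓ⟩)
    exact ⟨x, mem_inter.2 ⟨mem_insert_of_mem (mem_inter.1 hx).1, (mem_inter.1 hx).2⟩⟩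

theorem Linear.card_linesAvoiding_add_three_le_nu2 (hlin : Linear L) {ℓ₀ a b : Finset α}
    (hℓ₀ : ℓ₀ ∈ L) (hpℓ₀ : p ∈ ℓ₀) (hqℓ₀ : q ∈ ℓ₀) (ha : a ∈ L) (hpa : p ∈ a) (hqa : q ∉ a)
    (hb : b ∈ L) (hqb : q ∈ b) (hpb : p ∉ b)
    (hab : ∀ x ∈ a, x ∈ b → ∀ r ∈ linesAvoiding L p q, x ∉ r)
    (hR : IsMatching L (linesAvoiding L p q)) : (linesAvoiding L p q).card + 3 ≤ nu2 L := by
  have hℓ₀a : ∀ x ∈ ℓ₀, x ∈ a → x = p := fun x hx hxa =>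
    hlin.eq_of_mem_of_mem hℓ₀ ha (ne_of_mem_of_not_mem' hqℓ₀ hqa) hx hxa hpℓ₀ hpa
  have hℓ₀b : ∀ x ∈ ℓ₀, x ∈ b → x = q := fun x hx hxb =>
    hlin.eq_of_mem_of_mem hℓ₀ hb (ne_of_mem_of_not_mem' hpℓ₀ hpb) hx hxb hqℓ₀ hqb
  have hX : IsTwoPacking L {ℓ₀, a, b} := isTwoPacking_triple hℓ₀ ha hb <|
    eq_empty_of_forall_notMem fun x hx => by
      simp only [mem_inter] at hx
      exact hpb (hℓ₀a x hx.1.1 hx.1.2 ▸ hx.2)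
  have hdisj : Disjoint {ℓ₀, a, b} (linesAvoiding L p q) := by
    simp [hpℓ₀, hpa, hqb]
  have hpacking := hX.union_of_isMatching hR hdisj fun u hu v hv huv x hxu hxv r hr hxr => by
    obtain ⟨-, hpr, hqr⟩ := mem_linesAvoiding.1 hr
    have hxp : x ≠ p := ne_of_mem_of_not_mem hxr hpr
    have hxq : x ≠ q := ne_of_mem_of_not_mem hxr hqr
    -- a point on two of `ℓ₀`, `a`, `b` is `p`, `q` or a common point of `a` and `b`
    simp only [mem_insert, mem_singleton] at hu hv
    rcases hu with rfl | rfl | rfl <;> rcases hv with rfl | rfl | rfl <;>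
      first
      | exact huv rfl
      | exact hxp (hℓ₀a x hxu hxv)
      | exact hxp (hℓ₀a x hxv hxu)
      | exact hxq (hℓ₀b x hxu hxv)
      | exact hxq (hℓ₀b x hxv hxu)
      | exact hab x hxu hxv r hr hxr
      | exact hab x hxv hxu r hr hxr
  have hcard : ({ℓ₀, a, b} : Finset (Finset α)).card = 3 :=
    card_eq_three.2 ⟨ℓ₀, a, b, ne_of_mem_of_not_mem' hqℓ₀ hqa, ne_of_mem_of_not_mem' hpℓ₀ hpb,
      ne_of_mem_of_not_mem' hpa hpb, rfl⟩
  have := hpacking.card_le_nu2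
  rw [card_union_of_disjoint hdisj, hcard] at this
  omega

theorem Linear.tau_le_card_linesAvoiding_add_one_or (hlin : Linear L) {ℓ₀ : Finset α}
    (hℓ₀ : ℓ₀ ∈ L) (hpℓ₀ : p ∈ ℓ₀) (hqℓ₀ : q ∈ ℓ₀) :
    tau L ≤ (linesAvoiding L p q).card + 1 ∨ (linesAvoiding L p q).card + 3 ≤ nu2 L := by
  by_cases hb : ∃ b ∈ L, q ∈ b ∧ p ∉ b
  swap
  · push Not at hb
    exact Or.inl (tau_le_card_linesAvoiding_add_one_of_forall_mem_imp hb)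
  obtain ⟨b, hb, hqb, hpb⟩ := hb
  by_cases hcover : ∀ a ∈ L, p ∈ a → q ∉ a → ∃ x ∈ a, x ∈ b ∧ ∃ r ∈ linesAvoiding L p q, x ∈ r
  · exact Or.inl (hlin.tau_le_card_linesAvoiding_add_one_of_forall_exists hb hqb hcover)
  push Not at hcover
  obtain ⟨a, ha, hpa, hqa, hab⟩ := hcover
  by_cases hmeet : ∃ r ∈ linesAvoiding L p q, ∃ r' ∈ linesAvoiding L p q, r ≠ r' ∧ (r ∩ r').Nonempty
  · obtain ⟨r, hr, r', hr', hrr', x, hx⟩ := hmeet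
    rw [mem_inter] at hx
    exact Or.inl (tau_le_card_linesAvoiding_add_one_of_mem_of_mem hr hr' hrr' hx.1 hx.2)
  push Not at hmeet
  exact Or.inr (hlin.card_linesAvoiding_add_three_le_nu2 hℓ₀ hpℓ₀ hqℓ₀ ha hpa hqa hb hqb hpb hab
    ⟨filter_subset _ L, hmeet⟩)

end LinesAvoiding

end

theorem stmt3_general (L : Finset (Finset P)) (hlin : Linear L) (p : P) (Δ Δ' : ℕ)
    (hp : deg L p = Δ)
    (hΔ' : IsGreatest {n | ∃ x : P, x ≠ p ∧ deg L x = n} Δ')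
    (hcard : L.card ≤ Δ + Δ' + nu2 L - 3) :
    tau L ≤ nu2 L - 1 := by
  rcases L.eq_empty_or_nonempty with rfl | hL
  · exact (tau_le_card_add_card (L := ∅) (T := ∅) (R := ∅) (by simp)).trans (by simp)
  obtain ⟨q, hqp, hq⟩ := hΔ'.1
  have hcount := card_add_card_filter_mem_mem L p q
  have hboth := hlin.card_filter_mem_mem_le_one hqp.symm
  have hτ := tau_le_card_linesAvoiding_add_two (L := L) (p := p) (q := q)
  have hLpos := hL.card_pos
  rcases Nat.eq_zero_or_pos (L.filter fun ℓ => p ∈ ℓ ∧ q ∈ ℓ).card with h0 | hpos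
  · omega
  obtain ⟨ℓ₀, hℓ₀⟩ := card_pos.1 hpos
  obtain ⟨hℓ₀L, hpℓ₀, hqℓ₀⟩ := mem_filter.1 hℓ₀
  rcases hlin.tau_le_card_linesAvoiding_add_one_or hℓ₀L hpℓ₀ hqℓ₀ with h | h <;> omega

theorem stmt3 (L : Finset (Finset P)) (hlin : Linear L) (p : P) (Δ Δ' : ℕ)
    (hp : deg L p = Δ) (hmax : ∀ x : P, deg L x ≤ Δ)
    (hΔ' : IsGreatest {n | ∃ x : P, x ≠ p ∧ deg L x = n} Δ')
    (hcard : L.card ≤ Δ + Δ' + nu2 L - 3) :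
    tau L ≤ nu2 L - 1 :=
  stmt3_general L hlin p Δ Δ' hp hΔ' hcard
end

section
/- Let (P, L) be an intersecting r-uniform linear system with r ≥ 4 an even integer. If τ > (r + 2)/2, then ν₂ ≤ r. -/
open Finset

variable {P : Type*} [Fintype P] [DecidableEq P]

/-!
Suppose some 2-packing has more than `r` lines and keep `r + 1` of them, `R`. The other `r`
lines of `R` meet a line `a ∈ R` in distinct points, and `a` has only `r` points, so every point
of a line of `R` lies on exactly two lines of `R`. A line `ℓ ∉ R` would meet each line of `R`
exactly once, so `r + 1 = ∑ p ∈ ℓ, deg R p` would be even. Hence `L = R`, and pairing up the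
`r + 1` lines, one common point for each pair, gives a transversal of size `(r + 2) / 2`.
-/

open Finset

section

omit [Fintype P]

variable {L M R : Finset (Finset P)}

theorem Intersecting.mono (hL : Intersecting L) (hM : M ⊆ L) : Intersecting M :=
  fun a ha b hb => hL a (hM ha) b (hM hb)

theorem Intersecting.exists_transversal_card_le (hL : Intersecting L) :
    ∃ T, IsTransversal L T ∧ #T ≤ (#L + 1) / 2 := by
  induction L using Finset.strongInduction with
  | H L ih =>
  obtain rfl | ⟨a, ha⟩ := L.eq_empty_or_nonempty
  · exact ⟨∅, by simp [IsTransversal], by simp⟩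
  obtain hsingle | ⟨b, hb⟩ := (L.erase a).eq_empty_or_nonempty
  · obtain rfl : L = {a} :=
      ((erase_eq_empty_iff L a).mp hsingle).resolve_left (ne_empty_of_mem ha)
    obtain ⟨p, hp⟩ : a.Nonempty := by simpa using hL a ha a ha
    exact ⟨{p}, fun ℓ hℓ => ⟨p, by simp_all⟩, by simp⟩
  obtain ⟨hba, hbL⟩ := mem_erase.mp hb
  obtain ⟨p, hp⟩ := hL a ha b hbL
  obtain ⟨hpa, hpb⟩ := mem_inter.mp hp
  have hsub : (L.erase a).erase b ⊂ L := (erase_subset _ _).trans_ssubset (erase_ssubset ha)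
  obtain ⟨T, hT, hTcard⟩ := ih _ hsub (hL.mono hsub.subset)
  refine ⟨insert p T, fun ℓ hℓ => ?_, ?_⟩
  · by_cases hℓab : ℓ = a ∨ ℓ = b
    · obtain rfl | rfl := hℓab <;> exact ⟨p, by simp [*]⟩
    push Not at hℓab
    obtain ⟨q, hq⟩ := hT ℓ (by simp [hℓ, hℓab])
    exact ⟨q, inter_subset_inter_right (subset_insert p T) hq⟩
  · have hcard : #((L.erase a).erase b) + 2 = #L := by
      rw [card_erase_of_mem hb, card_erase_of_mem ha]
      have := one_lt_card.mpr ⟨a, ha, b, hbL, Ne.symm hba⟩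
      omega
    have := card_insert_le p T
    omega

theorem Intersecting.tau_le (hL : Intersecting L) : tau L ≤ (#L + 1) / 2 := by
  obtain ⟨T, hT, hTcard⟩ := hL.exists_transversal_card_le
  calc tau L ≤ #T := Nat.sInf_le ⟨T, rfl, hT⟩
    _ ≤ (#L + 1) / 2 := hTcard

theorem sum_card_inter_eq_sum_deg (s : Finset P) (R : Finset (Finset P)) :
    ∑ t ∈ R, #(s ∩ t) = ∑ p ∈ s, deg R p := by
  simp_rw [deg, ← filter_mem_eq_inter, card_eq_sum_ones, sum_filter]
  exact sum_comm

theorem IsTwoPacking.mono (hR : IsTwoPacking L R) (hM : M ⊆ R) : IsTwoPacking L M :=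
  ⟨hM.trans hR.1, fun a ha b hb c hc => hR.2 a (hM ha) b (hM hb) c (hM hc)⟩

theorem IsTwoPacking.deg_le_two (hR : IsTwoPacking L R) (p : P) : deg R p ≤ 2 := by
  by_contra! h
  obtain ⟨a, ha, b, hb, c, hc, hab, hac, hbc⟩ := two_lt_card.mp h
  rw [mem_filter] at ha hb hc
  have hp : p ∈ a ∩ b ∩ c := by simp [ha.2, hb.2, hc.2]
  rw [hR.2 a ha.1 b hb.1 c hc.1 hab hac hbc] at hp
  exact notMem_empty p hp

theorem IsTwoPacking.deg_eq_two (hL : Intersecting L) (hR : IsTwoPacking L R) {a : Finset P}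
    (ha : a ∈ R) (hsmall : #a < #R) {p : P} (hp : p ∈ a) : deg R p = 2 := by
  -- The other lines of `R` all meet `a`, forcing `∑ q ∈ a, deg R q ≥ 2 * #a`; each term is `≤ 2`.
  have hmeet : #a ≤ ∑ b ∈ R.erase a, #(a ∩ b) :=
    calc #a ≤ #(R.erase a) := by rw [card_erase_of_mem ha]; omega
      _ = ∑ b ∈ R.erase a, 1 := card_eq_sum_ones _
      _ ≤ _ := sum_le_sum fun b hb =>
        card_pos.mpr (hL a (hR.1 ha) b (hR.1 (mem_of_mem_erase hb)))
  have hsum : 2 * #a ≤ ∑ q ∈ a, deg R q :=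
    calc 2 * #a ≤ #(a ∩ a) + ∑ b ∈ R.erase a, #(a ∩ b) := by rw [inter_self]; omega
      _ = ∑ b ∈ R, #(a ∩ b) := add_sum_erase R (fun b => #(a ∩ b)) ha
      _ = ∑ q ∈ a, deg R q := sum_card_inter_eq_sum_deg a R
  by_contra hne
  have hlt : ∑ q ∈ a, deg R q < ∑ q ∈ a, 2 := sum_lt_sum (fun q _ => hR.deg_le_two q)
    ⟨p, hp, lt_of_le_of_ne (hR.deg_le_two p) hne⟩
  rw [sum_const, smul_eq_mul] at hlt
  omega

theorem IsTwoPacking.even_deg (hL : Intersecting L) (hR : IsTwoPacking L R)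
    (hsmall : ∀ a ∈ R, #a < #R) (p : P) : Even (deg R p) := by
  obtain hzero | hpos := Nat.eq_zero_or_pos (deg R p)
  · exact hzero ▸ Even.zero
  obtain ⟨a, ha⟩ := card_pos.mp (show 0 < #{b ∈ R | p ∈ b} from hpos)
  rw [mem_filter] at ha
  rw [hR.deg_eq_two hL ha.1 (hsmall a ha.1) ha.2]
  exact even_two

/-- A line `ℓ ∉ R` would meet each line of `R` once, making `#R = ∑ p ∈ ℓ, deg R p` even. -/
theorem mem_of_even_deg (hlin : Linear L) (hL : Intersecting L) (hRL : R ⊆ L)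
    (hdeg : ∀ p, Even (deg R p)) (hodd : Odd #R) {ℓ : Finset P} (hℓ : ℓ ∈ L) : ℓ ∈ R := by
  by_contra hℓR
  have hone : ∀ a ∈ R, #(ℓ ∩ a) = 1 := fun a ha =>
    le_antisymm (hlin ℓ hℓ a (hRL ha) fun h => hℓR (h ▸ ha)) (card_pos.mpr (hL ℓ hℓ a (hRL ha)))
  have hcount : #R = ∑ p ∈ ℓ, deg R p := by
    rw [← sum_card_inter_eq_sum_deg, sum_congr rfl hone, card_eq_sum_ones]
  exact Nat.not_even_iff_odd.mpr hodd (hcount ▸ even_sum _ fun p _ => hdeg p)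

end

theorem stmt7_general (r : ℕ) (heven : Even r) (L : Finset (Finset P))
    (hlin : Linear L) (hint : Intersecting L) (hunif : Uniform L r)
    (htau : (r + 2) / 2 < tau L) :
    nu2 L ≤ r := by
  refine csSup_le' ?_
  rintro _ ⟨R, hR, rfl⟩
  by_contra! hbig
  obtain ⟨S, hSR, hScard⟩ := exists_subset_card_eq (Nat.succ_le_of_lt hbig)
  have hS : IsTwoPacking L S := hR.mono hSR
  have hdeg := hS.even_deg hint fun a ha => by rw [hunif a (hS.1 ha), hScard]; omega
  have hLS : L ⊆ S := fun ℓ hℓ =>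
    mem_of_even_deg hlin hint hS.1 hdeg (hScard ▸ heven.add_one) hℓ
  have hτ := hint.tau_le
  have hLcard := card_le_card hLS
  omega

theorem stmt7 (r : ℕ) (hr : 4 ≤ r) (heven : Even r) (L : Finset (Finset P))
    (hlin : Linear L) (hint : Intersecting L) (hunif : Uniform L r)
    (htau : (r + 2) / 2 < tau L) :
    nu2 L ≤ r :=
  stmt7_general r heven L hlin hint hunif htau
end

section
/- Let (P, L) be an intersecting r-partite linear system with r ≥ 4 even, and suppose ν₂ ≤ r − 1. Let p be a point of maximum degree Δ and Δ′ the maximum degree among points other than p. If |L| ≤ Δ + Δ′ + ν₂ − 3, then τ ≤ r − 2. -/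
open Finset

variable {P : Type*} [Fintype P] [DecidableEq P]

section Aux

lemma tau_le_of_transversal {L : Finset (Finset P)} {T : Finset P}
    (h : IsTransversal L T) : tau L ≤ T.card :=
  Nat.sInf_le ⟨T, rfl, h⟩

lemma le_nu2 {L R : Finset (Finset P)} (h : IsTwoPacking L R) : R.card ≤ nu2 L :=
  le_csSup ⟨L.card, by rintro n ⟨R', hR', rfl⟩; exact card_le_card hR'.1⟩ ⟨R, h, rfl⟩

lemma exists_cover (S : Finset (Finset P)) :
    (∀ s ∈ S, s.Nonempty) →
      ∃ T : Finset P, T.card ≤ S.card ∧ ∀ s ∈ S, (T ∩ s).Nonempty := by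
  classical
  induction S using Finset.induction_on with
  | empty => intro _; exact ⟨∅, by simp, by simp⟩
  | @insert a S' haS ih =>
    intro h
    obtain ⟨T', hT'c, hT'⟩ := ih (fun s hs => h s (mem_insert_of_mem hs))
    obtain ⟨x, hx⟩ := h a (mem_insert_self a S')
    refine ⟨insert x T', ?_, ?_⟩
    · calc (insert x T').card ≤ T'.card + 1 := card_insert_le _ _
        _ ≤ S'.card + 1 := by omega
        _ = (insert a S').card := (card_insert_of_notMem haS).symm
    · intro s hs
      rcases mem_insert.mp hs with rfl | hs'
      · exact ⟨x, mem_inter.mpr ⟨mem_insert_self _ _, hx⟩⟩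
      · obtain ⟨y, hy⟩ := hT' s hs'
        rw [mem_inter] at hy
        exact ⟨y, mem_inter.mpr ⟨mem_insert_of_mem hy.1, hy.2⟩⟩

lemma packing4 {L : Finset (Finset P)} {a b c d : Finset P}
    (ha : a ∈ L) (hb : b ∈ L) (hc : c ∈ L) (hd : d ∈ L)
    (hab : a ≠ b) (hac : a ≠ c) (had : a ≠ d) (hbc : b ≠ c) (hbd : b ≠ d) (hcd : c ≠ d)
    (h1 : ∀ x, x ∈ a → x ∈ b → x ∈ c → False)
    (h2 : ∀ x, x ∈ a → x ∈ b → x ∈ d → False)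
    (h3 : ∀ x, x ∈ a → x ∈ c → x ∈ d → False)
    (h4 : ∀ x, x ∈ b → x ∈ c → x ∈ d → False) :
    IsTwoPacking L {a, b, c, d} ∧ ({a, b, c, d} : Finset (Finset P)).card = 4 := by
  classical
  constructor
  · constructor
    · intro ℓ hℓ
      simp only [mem_insert, mem_singleton] at hℓ
      rcases hℓ with rfl | rfl | rfl | rfl <;> assumption
    · intro u hu v hv w hw huv huw hvw
      simp only [mem_insert, mem_singleton] at hu hv hw
      apply eq_empty_of_forall_notMem
      intro x hx
      simp only [mem_inter] at hx
      obtain ⟨⟨hxu, hxv⟩, hxw⟩ := hx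
      rcases hu with rfl | rfl | rfl | rfl <;> rcases hv with rfl | rfl | rfl | rfl <;>
        rcases hw with rfl | rfl | rfl | rfl <;>
          first
            | exact huv rfl
            | exact huw rfl
            | exact hvw rfl
            | solve_by_elim
  · rw [card_insert_of_notMem (by simp [hab, hac, had]),
      card_insert_of_notMem (by simp [hbc, hbd]),
      card_insert_of_notMem (by simp [hcd]), card_singleton]

end Aux

theorem stmt13 (r : ℕ) (hr : 4 ≤ r) (heven : Even r) (L : Finset (Finset P))
    (hlin : Linear L) (hint : Intersecting L) (hpart : Partite L r)
    (hnu2 : nu2 L ≤ r - 1) (p : P) (Δ Δ' : ℕ)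
    (hp : deg L p = Δ) (hmax : ∀ x : P, deg L x ≤ Δ)
    (hΔ' : IsGreatest {n | ∃ x : P, x ≠ p ∧ deg L x = n} Δ')
    (hcard : L.card ≤ Δ + Δ' + nu2 L - 3) :
    tau L ≤ r - 2 := by
  classical
  obtain ⟨⟨q, hqp, hq⟩, -⟩ := hΔ'
  set ν := nu2 L with hν
  set A : Finset (Finset P) := L.filter (fun ℓ => p ∈ ℓ) with hAdef
  set B : Finset (Finset P) := L.filter (fun ℓ => q ∈ ℓ) with hBdef
  set S : Finset (Finset P) := L.filter (fun ℓ => p ∉ ℓ ∧ q ∉ ℓ) with hSdef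
  have memA : ∀ {ℓ : Finset P}, ℓ ∈ A ↔ ℓ ∈ L ∧ p ∈ ℓ := by
    intro ℓ; rw [hAdef, mem_filter]
  have memB : ∀ {ℓ : Finset P}, ℓ ∈ B ↔ ℓ ∈ L ∧ q ∈ ℓ := by
    intro ℓ; rw [hBdef, mem_filter]
  have memS : ∀ {ℓ : Finset P}, ℓ ∈ S ↔ ℓ ∈ L ∧ p ∉ ℓ ∧ q ∉ ℓ := by
    intro ℓ; rw [hSdef, mem_filter]
  have hA : A.card = Δ := by rw [hAdef]; exact hp
  have hB : B.card = Δ' := by rw [hBdef]; exact hq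
  have hSsub : S ⊆ L := by rw [hSdef]; exact filter_subset _ _
  have hclassify : ∀ ℓ ∈ L, p ∈ ℓ ∨ q ∈ ℓ ∨ ℓ ∈ S := by
    intro ℓ hℓ
    by_cases h1 : p ∈ ℓ
    · exact Or.inl h1
    by_cases h2 : q ∈ ℓ
    · exact Or.inr (Or.inl h2)
    exact Or.inr (Or.inr (memS.mpr ⟨hℓ, h1, h2⟩))
  have hSdiff : S = L \ (A ∪ B) := by
    ext ℓ
    rw [memS, mem_sdiff, mem_union, memA, memB]
    tauto
  have hABsub : A ∪ B ⊆ L := by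
    intro ℓ hℓ
    rcases mem_union.mp hℓ with h | h
    · exact (memA.mp h).1
    · exact (memB.mp h).1
  have hUnion : (A ∪ B).card + (A ∩ B).card = A.card + B.card :=
    card_union_add_card_inter A B
  have hScard : S.card + (A ∪ B).card = L.card := by
    rw [hSdiff]; exact card_sdiff_add_card_eq_card hABsub
  have hne : ∀ ℓ ∈ L, ℓ.Nonempty := by
    intro ℓ hℓ
    have := hint ℓ hℓ ℓ hℓ
    rwa [inter_self] at this
  have key : ∀ a ∈ L, ∀ b ∈ L, a ≠ b → ∀ w, w ∈ a → w ∈ b →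
      ∀ x, x ∈ a → x ∈ b → x = w := by
    intro a ha b hb hab w hwa hwb x hxa hxb
    exact card_le_one.mp (hlin a ha b hb hab) x (mem_inter.mpr ⟨hxa, hxb⟩)
      w (mem_inter.mpr ⟨hwa, hwb⟩)
  rcases eq_empty_or_nonempty (A ∩ B) with hABe | ⟨ℓ₀, hℓ₀⟩
  · -- no line through both p and q
    have hABc : (A ∩ B).card = 0 := by rw [hABe]; exact card_empty
    obtain ⟨T₀, hT₀c, hT₀⟩ := exists_cover S (fun s hs => hne s (hSsub hs))
    have htrans : IsTransversal L (insert p (insert q T₀)) := by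
      intro ℓ hℓ
      rcases hclassify ℓ hℓ with h | h | h
      · exact ⟨p, mem_inter.mpr ⟨mem_insert_self _ _, h⟩⟩
      · exact ⟨q, mem_inter.mpr ⟨mem_insert_of_mem (mem_insert_self _ _), h⟩⟩
      · obtain ⟨y, hy⟩ := hT₀ ℓ h
        rw [mem_inter] at hy
        exact ⟨y, mem_inter.mpr ⟨mem_insert_of_mem (mem_insert_of_mem hy.1), hy.2⟩⟩
    have h1 := tau_le_of_transversal htrans
    have h2 : (insert p (insert q T₀)).card ≤ T₀.card + 2 := by
      calc (insert p (insert q T₀)).card ≤ (insert q T₀).card + 1 := card_insert_le _ _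
        _ ≤ T₀.card + 2 := by have := card_insert_le q T₀; omega
    omega
  · -- there is a (unique) line ℓ₀ through both p and q
    have hℓ₀A : ℓ₀ ∈ A := mem_of_mem_inter_left hℓ₀
    have hℓ₀B : ℓ₀ ∈ B := mem_of_mem_inter_right hℓ₀
    have hℓ₀L : ℓ₀ ∈ L := (memA.mp hℓ₀A).1
    have hpℓ₀ : p ∈ ℓ₀ := (memA.mp hℓ₀A).2
    have hqℓ₀ : q ∈ ℓ₀ := (memB.mp hℓ₀B).2
    have hABone : A ∩ B = {ℓ₀} := by
      apply eq_singleton_iff_unique_mem.mpr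
      refine ⟨hℓ₀, ?_⟩
      intro ℓ' hℓ'
      by_contra hne'
      have hℓ'A := mem_of_mem_inter_left hℓ'
      have hℓ'B := mem_of_mem_inter_right hℓ'
      have hpq : p = q := key ℓ' (memA.mp hℓ'A).1 ℓ₀ hℓ₀L hne' q (memB.mp hℓ'B).2 hqℓ₀
        p (memA.mp hℓ'A).2 hpℓ₀
      exact hqp hpq.symm
    have hABc : (A ∩ B).card = 1 := by rw [hABone]; exact card_singleton _
    rcases Nat.lt_or_ge S.card 2 with hSlt | hS2
    · -- at most one line misses both p and q
      rcases Nat.le_one_iff_eq_zero_or_eq_one.mp (by omega : S.card ≤ 1) with h0 | h1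
      · -- S empty : T = {p, q}
        have hSe : S = ∅ := card_eq_zero.mp h0
        have htrans : IsTransversal L ({p, q} : Finset P) := by
          intro ℓ hℓ
          rcases hclassify ℓ hℓ with h | h | h
          · exact ⟨p, mem_inter.mpr ⟨mem_insert_self _ _, h⟩⟩
          · exact ⟨q, mem_inter.mpr ⟨mem_insert_of_mem (mem_singleton_self q), h⟩⟩
          · rw [hSe] at h; exact absurd h (notMem_empty ℓ)
        have h1 := tau_le_of_transversal htrans
        have h2 : ({p, q} : Finset P).card ≤ 2 := card_insert_le _ _ |>.trans (by simp)
        omega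
      · -- S = {ℓb}
        obtain ⟨ℓb, hSeq⟩ := card_eq_one.mp h1
        have hℓbS : ℓb ∈ S := hSeq ▸ mem_singleton_self ℓb
        have hℓbL : ℓb ∈ L := hSsub hℓbS
        have hpℓb : p ∉ ℓb := (memS.mp hℓbS).2.1
        have hqℓb : q ∉ ℓb := (memS.mp hℓbS).2.2
        by_cases h5 : 5 ≤ r
        · -- r ≥ 5 : T = {p, q, y} with y ∈ ℓb
          obtain ⟨y, hy⟩ := hne ℓb hℓbL
          have htrans : IsTransversal L (insert p (insert q ({y} : Finset P))) := by
            intro ℓ hℓ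
            rcases hclassify ℓ hℓ with h | h | h
            · exact ⟨p, mem_inter.mpr ⟨mem_insert_self _ _, h⟩⟩
            · exact ⟨q, mem_inter.mpr ⟨mem_insert_of_mem (mem_insert_self _ _), h⟩⟩
            · rw [hSeq, mem_singleton] at h
              subst h
              exact ⟨y, mem_inter.mpr
                ⟨mem_insert_of_mem (mem_insert_of_mem (mem_singleton_self y)), hy⟩⟩
          have h1 := tau_le_of_transversal htrans
          have h2 : (insert p (insert q ({y} : Finset P))).card ≤ 3 := by
            calc (insert p (insert q ({y} : Finset P))).card
                ≤ (insert q ({y} : Finset P)).card + 1 := card_insert_le _ _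
              _ ≤ 3 := by have := card_insert_le q ({y} : Finset P); simp at this ⊢; omega
          omega
        · -- r = 4
          have hr4 : r = 4 := by omega
          by_cases hD : Δ' ≤ 2
          · -- small max degree away from p : two points suffice
            have hnotp : ∀ ℓ ∈ L, p ∉ ℓ → ℓ ∈ B.erase ℓ₀ ∨ ℓ = ℓb := by
              intro ℓ hℓ hpℓ
              rcases hclassify ℓ hℓ with h | h | h
              · exact absurd h hpℓ
              · exact Or.inl (mem_erase.mpr
                  ⟨fun e => hpℓ (e ▸ hpℓ₀), memB.mpr ⟨hℓ, h⟩⟩)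
              · rw [hSeq, mem_singleton] at h; exact Or.inr h
            have hB'c : (B.erase ℓ₀).card = Δ' - 1 := by
              rw [card_erase_of_mem hℓ₀B, hB]
            rcases Nat.le_one_iff_eq_zero_or_eq_one.mp
                (by omega : (B.erase ℓ₀).card ≤ 1) with hb0 | hb1
            · -- every line not through p equals ℓb
              have hBe : B.erase ℓ₀ = ∅ := card_eq_zero.mp hb0
              obtain ⟨y, hy⟩ := hne ℓb hℓbL
              have htrans : IsTransversal L (insert p ({y} : Finset P)) := by
                intro ℓ hℓ
                by_cases hpℓ : p ∈ ℓ
                · exact ⟨p, mem_inter.mpr ⟨mem_insert_self _ _, hpℓ⟩⟩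
                rcases hnotp ℓ hℓ hpℓ with h | rfl
                · rw [hBe] at h; exact absurd h (notMem_empty ℓ)
                · exact ⟨y, mem_inter.mpr
                    ⟨mem_insert_of_mem (mem_singleton_self y), hy⟩⟩
              have h1 := tau_le_of_transversal htrans
              have h2 : (insert p ({y} : Finset P)).card ≤ 2 :=
                (card_insert_le _ _).trans (by simp)
              omega
            · -- B.erase ℓ₀ = {m}
              obtain ⟨m, hm⟩ := card_eq_one.mp hb1
              have hmL : m ∈ L :=
                (memB.mp (mem_of_mem_erase (hm ▸ mem_singleton_self m))).1
              obtain ⟨y, hy⟩ := hint m hmL ℓb hℓbL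
              rw [mem_inter] at hy
              have htrans : IsTransversal L (insert p ({y} : Finset P)) := by
                intro ℓ hℓ
                by_cases hpℓ : p ∈ ℓ
                · exact ⟨p, mem_inter.mpr ⟨mem_insert_self _ _, hpℓ⟩⟩
                have hymem : y ∈ insert p ({y} : Finset P) :=
                  mem_insert_of_mem (mem_singleton_self y)
                rcases hnotp ℓ hℓ hpℓ with h | rfl
                · rw [hm, mem_singleton] at h
                  subst h
                  exact ⟨y, mem_inter.mpr ⟨hymem, hy.1⟩⟩
                · exact ⟨y, mem_inter.mpr ⟨hymem, hy.2⟩⟩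
              have h1 := tau_le_of_transversal htrans
              have h2 : (insert p ({y} : Finset P)).card ≤ 2 :=
                (card_insert_le _ _).trans (by simp)
              omega
          · -- Δ' ≥ 3 : contradiction, we build a 2-packing of size 4
            exfalso
            push_neg at hD
            have hΔ'Δ : Δ' ≤ Δ := by have := hmax q; rw [hq] at this; exact this
            have hB'c : (B.erase ℓ₀).card = Δ' - 1 := by
              rw [card_erase_of_mem hℓ₀B, hB]
            obtain ⟨m₁, hm₁, m₂, hm₂, hm12⟩ :=
              one_lt_card.mp (by omega : 1 < (B.erase ℓ₀).card)
            have hm₁L : m₁ ∈ L := (memB.mp (mem_of_mem_erase hm₁)).1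
            have hm₂L : m₂ ∈ L := (memB.mp (mem_of_mem_erase hm₂)).1
            have hqm₁ : q ∈ m₁ := (memB.mp (mem_of_mem_erase hm₁)).2
            have hqm₂ : q ∈ m₂ := (memB.mp (mem_of_mem_erase hm₂)).2
            have hm₁ℓ₀ : m₁ ≠ ℓ₀ := (mem_erase.mp hm₁).1
            have hm₂ℓ₀ : m₂ ≠ ℓ₀ := (mem_erase.mp hm₂).1
            have hpm₁ : p ∉ m₁ := by
              intro h
              have : m₁ ∈ A ∩ B :=
                mem_inter.mpr ⟨memA.mpr ⟨hm₁L, h⟩, mem_of_mem_erase hm₁⟩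
              rw [hABone, mem_singleton] at this
              exact hm₁ℓ₀ this
            have hpm₂ : p ∉ m₂ := by
              intro h
              have : m₂ ∈ A ∩ B :=
                mem_inter.mpr ⟨memA.mpr ⟨hm₂L, h⟩, mem_of_mem_erase hm₂⟩
              rw [hABone, mem_singleton] at this
              exact hm₂ℓ₀ this
            obtain ⟨x₁, hx₁⟩ := hint m₁ hm₁L ℓb hℓbL
            obtain ⟨x₂, hx₂⟩ := hint m₂ hm₂L ℓb hℓbL
            rw [mem_inter] at hx₁ hx₂
            have hm₁ℓb : m₁ ≠ ℓb := fun e => hqℓb (e ▸ hqm₁)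
            have hm₂ℓb : m₂ ≠ ℓb := fun e => hqℓb (e ▸ hqm₂)
            have hℓ₀ℓb : ℓ₀ ≠ ℓb := fun e => hpℓb (e ▸ hpℓ₀)
            have hx12 : x₁ ≠ x₂ := by
              intro h
              have hxq : x₁ = q :=
                key m₁ hm₁L m₂ hm₂L hm12 q hqm₁ hqm₂ x₁ hx₁.1 (h ▸ hx₂.1)
              exact hqℓb (hxq ▸ hx₁.2)
            obtain ⟨n, hnA'⟩ := card_pos.mp
              (by rw [card_erase_of_mem hℓ₀A, hA]; omega : 0 < (A.erase ℓ₀).card)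
            have hnℓ₀ : n ≠ ℓ₀ := (mem_erase.mp hnA').1
            have hnA : n ∈ A := mem_of_mem_erase hnA'
            have hnL : n ∈ L := (memA.mp hnA).1
            have hpn : p ∈ n := (memA.mp hnA).2
            have hqn : q ∉ n := by
              intro h
              have : n ∈ A ∩ B := mem_inter.mpr ⟨hnA, memB.mpr ⟨hnL, h⟩⟩
              rw [hABone, mem_singleton] at this
              exact hnℓ₀ this
            have hnm₁ : n ≠ m₁ := fun e => hpm₁ (e ▸ hpn)
            have hnm₂ : n ≠ m₂ := fun e => hpm₂ (e ▸ hpn)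
            have hnℓb : n ≠ ℓb := fun e => hpℓb (e ▸ hpn)
            have hnu4 : (4 : ℕ) ≤ ν := by
              by_cases hx1n : x₁ ∈ n
              · -- packing {ℓ₀, n, m₂, ℓb}
                have H1 : ∀ x, x ∈ ℓ₀ → x ∈ n → x ∈ m₂ → False := fun x ha hb hc =>
                  hpm₂ (key ℓ₀ hℓ₀L n hnL (Ne.symm hnℓ₀) p hpℓ₀ hpn x ha hb ▸ hc)
                have H2 : ∀ x, x ∈ ℓ₀ → x ∈ n → x ∈ ℓb → False := fun x ha hb hc =>
                  hpℓb (key ℓ₀ hℓ₀L n hnL (Ne.symm hnℓ₀) p hpℓ₀ hpn x ha hb ▸ hc)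
                have H3 : ∀ x, x ∈ ℓ₀ → x ∈ m₂ → x ∈ ℓb → False := fun x ha hb hc =>
                  hqℓb (key ℓ₀ hℓ₀L m₂ hm₂L (Ne.symm hm₂ℓ₀) q hqℓ₀ hqm₂ x ha hb ▸ hc)
                have H4 : ∀ x, x ∈ n → x ∈ m₂ → x ∈ ℓb → False := by
                  intro x ha hb hc
                  have e1 : x = x₁ := key n hnL ℓb hℓbL hnℓb x₁ hx1n hx₁.2 x ha hc
                  have e2 : x = x₂ := key m₂ hm₂L ℓb hℓbL hm₂ℓb x₂ hx₂.1 hx₂.2 x hb hc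
                  exact hx12 (e1 ▸ e2)
                obtain ⟨hpack, hc4⟩ := packing4 hℓ₀L hnL hm₂L hℓbL
                  (Ne.symm hnℓ₀) (Ne.symm hm₂ℓ₀) hℓ₀ℓb hnm₂ hnℓb hm₂ℓb H1 H2 H3 H4
                have := le_nu2 hpack
                rw [hc4] at this
                exact this
              · by_cases hx2n : x₂ ∈ n
                · -- packing {ℓ₀, n, m₁, ℓb}
                  have H1 : ∀ x, x ∈ ℓ₀ → x ∈ n → x ∈ m₁ → False := fun x ha hb hc =>
                    hpm₁ (key ℓ₀ hℓ₀L n hnL (Ne.symm hnℓ₀) p hpℓ₀ hpn x ha hb ▸ hc)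
                  have H2 : ∀ x, x ∈ ℓ₀ → x ∈ n → x ∈ ℓb → False := fun x ha hb hc =>
                    hpℓb (key ℓ₀ hℓ₀L n hnL (Ne.symm hnℓ₀) p hpℓ₀ hpn x ha hb ▸ hc)
                  have H3 : ∀ x, x ∈ ℓ₀ → x ∈ m₁ → x ∈ ℓb → False := fun x ha hb hc =>
                    hqℓb (key ℓ₀ hℓ₀L m₁ hm₁L (Ne.symm hm₁ℓ₀) q hqℓ₀ hqm₁ x ha hb ▸ hc)
                  have H4 : ∀ x, x ∈ n → x ∈ m₁ → x ∈ ℓb → False := by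
                    intro x ha hb hc
                    have e1 : x = x₂ := key n hnL ℓb hℓbL hnℓb x₂ hx2n hx₂.2 x ha hc
                    have e2 : x = x₁ := key m₁ hm₁L ℓb hℓbL hm₁ℓb x₁ hx₁.1 hx₁.2 x hb hc
                    exact hx12 (e2 ▸ e1)
                  obtain ⟨hpack, hc4⟩ := packing4 hℓ₀L hnL hm₁L hℓbL
                    (Ne.symm hnℓ₀) (Ne.symm hm₁ℓ₀) hℓ₀ℓb hnm₁ hnℓb hm₁ℓb H1 H2 H3 H4
                  have := le_nu2 hpack
                  rw [hc4] at this
                  exact this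
                · -- packing {ℓb, m₁, m₂, n}
                  have H1 : ∀ x, x ∈ ℓb → x ∈ m₁ → x ∈ m₂ → False := fun x ha hb hc =>
                    hqℓb (key m₁ hm₁L m₂ hm₂L hm12 q hqm₁ hqm₂ x hb hc ▸ ha)
                  have H2 : ∀ x, x ∈ ℓb → x ∈ m₁ → x ∈ n → False := fun x ha hb hc =>
                    hx1n (key m₁ hm₁L ℓb hℓbL hm₁ℓb x₁ hx₁.1 hx₁.2 x hb ha ▸ hc)
                  have H3 : ∀ x, x ∈ ℓb → x ∈ m₂ → x ∈ n → False := fun x ha hb hc =>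
                    hx2n (key m₂ hm₂L ℓb hℓbL hm₂ℓb x₂ hx₂.1 hx₂.2 x hb ha ▸ hc)
                  have H4 : ∀ x, x ∈ m₁ → x ∈ m₂ → x ∈ n → False := fun x ha hb hc =>
                    hqn (key m₁ hm₁L m₂ hm₂L hm12 q hqm₁ hqm₂ x ha hb ▸ hc)
                  obtain ⟨hpack, hc4⟩ := packing4 hℓbL hm₁L hm₂L hnL
                    (Ne.symm hm₁ℓb) (Ne.symm hm₂ℓb) (Ne.symm hnℓb) hm12
                    (Ne.symm hnm₁) (Ne.symm hnm₂) H1 H2 H3 H4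
                  have := le_nu2 hpack
                  rw [hc4] at this
                  exact this
            omega
    · -- at least two lines miss both p and q
      obtain ⟨a, haS, b, hbS, hab⟩ := one_lt_card.mp hS2
      obtain ⟨x, hx⟩ := hint a (hSsub haS) b (hSsub hbS)
      rw [mem_inter] at hx
      have hb' : b ∈ S.erase a := mem_erase.mpr ⟨Ne.symm hab, hbS⟩
      obtain ⟨T₀, hT₀c, hT₀⟩ := exists_cover ((S.erase a).erase b)
        (fun s hs => hne s (hSsub (mem_of_mem_erase (mem_of_mem_erase hs))))
      have hc2 : ((S.erase a).erase b).card = S.card - 2 := by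
        rw [card_erase_of_mem hb', card_erase_of_mem haS]; omega
      have hxmem : x ∈ insert p (insert q (insert x T₀)) :=
        mem_insert_of_mem (mem_insert_of_mem (mem_insert_self _ _))
      have htrans : IsTransversal L (insert p (insert q (insert x T₀))) := by
        intro ℓ hℓ
        rcases hclassify ℓ hℓ with h | h | h
        · exact ⟨p, mem_inter.mpr ⟨mem_insert_self _ _, h⟩⟩
        · exact ⟨q, mem_inter.mpr ⟨mem_insert_of_mem (mem_insert_self _ _), h⟩⟩
        · by_cases hea : ℓ = a
          · exact ⟨x, mem_inter.mpr ⟨hxmem, hea ▸ hx.1⟩⟩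
          by_cases heb : ℓ = b
          · exact ⟨x, mem_inter.mpr ⟨hxmem, heb ▸ hx.2⟩⟩
          obtain ⟨y, hy⟩ := hT₀ ℓ (mem_erase.mpr ⟨heb, mem_erase.mpr ⟨hea, h⟩⟩)
          rw [mem_inter] at hy
          exact ⟨y, mem_inter.mpr
            ⟨mem_insert_of_mem (mem_insert_of_mem (mem_insert_of_mem hy.1)), hy.2⟩⟩
      have h1 := tau_le_of_transversal htrans
      have h2 : (insert p (insert q (insert x T₀))).card ≤ T₀.card + 3 := by
        calc (insert p (insert q (insert x T₀))).card
            ≤ (insert q (insert x T₀)).card + 1 := card_insert_le _ _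
          _ ≤ (insert x T₀).card + 2 := by have := card_insert_le q (insert x T₀); omega
          _ ≤ T₀.card + 3 := by have := card_insert_le x T₀; omega
      omega
end

section
/- Every intersecting 3-partite linear system satisfies τ ≤ 2, and the minimum number of lines of an intersecting 3-partite linear system with τ = 2 is 3 (i.e., f_l(3) = 3). -/
open Finset

variable {P : Type*} [Fintype P] [DecidableEq P]

set_option maxRecDepth 10000 in
theorem stmt16 :
    (∀ (Q : Type) [Fintype Q] [DecidableEq Q] (L : Finset (Finset Q)),
      Linear L → Intersecting L → Partite L 3 → tau L ≤ 2) ∧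
    (∀ (Q : Type) [Fintype Q] [DecidableEq Q] (L : Finset (Finset Q)),
      Linear L → Intersecting L → Partite L 3 → tau L = 2 → 3 ≤ L.card) ∧
    (∃ L : Finset (Finset (Fin 9)),
      Linear L ∧ Intersecting L ∧ Partite L 3 ∧ tau L = 2 ∧ L.card = 3) := by
  have key : ∀ (Q : Type) [Fintype Q] [DecidableEq Q] (L : Finset (Finset Q)),
      Linear L → Intersecting L → Partite L 3 →
      ∃ T : Finset Q, T.card ≤ 2 ∧ IsTransversal L T := by
    intro Q _ _ L hLin hInt hPar
    obtain ⟨X, hX1, hX2⟩ := hPar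
    by_cases hL : L = ∅
    · exact ⟨∅, by simp, fun m hm => by simp [hL] at hm⟩
    obtain ⟨ℓ, hℓ⟩ := Finset.nonempty_iff_ne_empty.mpr hL
    -- basic side facts
    have hsx : ∀ (x : Q) (i j : Fin 3), x ∈ X i → x ∈ X j → i = j := by
      intro x i j hi hj
      obtain ⟨k, _, hu⟩ := hX1 x
      rw [hu i hi, hu j hj]
    have hside : ∀ m ∈ L, ∀ i : Fin 3, ∃ b, b ∈ m ∧ b ∈ X i ∧
        ∀ y ∈ m, y ∈ X i → y = b := by
      intro m hm i
      obtain ⟨b, hb⟩ := Finset.card_eq_one.mp (hX2 m hm i)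
      have hbm : b ∈ m ∩ X i := hb ▸ Finset.mem_singleton_self b
      refine ⟨b, (Finset.mem_inter.mp hbm).1, (Finset.mem_inter.mp hbm).2, ?_⟩
      intro y hy hyi
      have : y ∈ m ∩ X i := Finset.mem_inter.mpr ⟨hy, hyi⟩
      rw [hb] at this
      exact Finset.mem_singleton.mp this
    have hsame : ∀ m ∈ L, ∀ x ∈ m, ∀ y ∈ m, ∀ i : Fin 3,
        x ∈ X i → y ∈ X i → x = y := by
      intro m hm x hx y hy i hxi hyi
      obtain ⟨b, _, _, hu⟩ := hside m hm i
      rw [hu x hx hxi, hu y hy hyi]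
    have hcov : ∀ m ∈ L, ∀ b0 b1 b2 : Q, b0 ∈ m → b0 ∈ X 0 → b1 ∈ m → b1 ∈ X 1 →
        b2 ∈ m → b2 ∈ X 2 → ∀ z ∈ m, z = b0 ∨ z = b1 ∨ z = b2 := by
      intro m hm b0 b1 b2 h0 h0X h1 h1X h2 h2X z hz
      obtain ⟨i, hi, -⟩ := hX1 z
      fin_cases i
      · exact Or.inl (hsame m hm z hz b0 h0 0 hi h0X)
      · exact Or.inr (Or.inl (hsame m hm z hz b1 h1 1 hi h1X))
      · exact Or.inr (Or.inr (hsame m hm z hz b2 h2 2 hi h2X))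
    obtain ⟨a0, ha0m, ha0X, -⟩ := hside ℓ hℓ 0
    obtain ⟨a1, ha1m, ha1X, -⟩ := hside ℓ hℓ 1
    obtain ⟨a2, ha2m, ha2X, -⟩ := hside ℓ hℓ 2
    have hcovℓ := hcov ℓ hℓ a0 a1 a2 ha0m ha0X ha1m ha1X ha2m ha2X
    have hcard2 : ∀ x y : Q, ({x, y} : Finset Q).card ≤ 2 :=
      fun x y => (Finset.card_insert_le _ _).trans (by simp)
    -- helper to extract a bad line from a failed transversal
    have hbad : ∀ x y : Q, ¬ IsTransversal L {x, y} →
        ∃ m ∈ L, x ∉ m ∧ y ∉ m := by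
      intro x y h
      simp only [IsTransversal, not_forall] at h
      obtain ⟨m, hm, hne⟩ := h
      refine ⟨m, hm, fun hx => hne ⟨x, Finset.mem_inter.mpr ⟨by simp, hx⟩⟩,
        fun hy => hne ⟨y, Finset.mem_inter.mpr ⟨by simp, hy⟩⟩⟩
    by_cases h12 : IsTransversal L {a1, a2}
    · exact ⟨{a1, a2}, hcard2 _ _, h12⟩
    by_cases h02 : IsTransversal L {a0, a2}
    · exact ⟨{a0, a2}, hcard2 _ _, h02⟩
    by_cases h01 : IsTransversal L {a0, a1}
    · exact ⟨{a0, a1}, hcard2 _ _, h01⟩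
    obtain ⟨ℓ0, hℓ0L, ha1ℓ0, ha2ℓ0⟩ := hbad a1 a2 h12
    obtain ⟨ℓ1, hℓ1L, ha0ℓ1, ha2ℓ1⟩ := hbad a0 a2 h02
    obtain ⟨ℓ2, hℓ2L, ha0ℓ2, ha1ℓ2⟩ := hbad a0 a1 h01
    -- each ℓi contains ai
    have hmem : ∀ m ∈ L, a1 ∉ m → a2 ∉ m → a0 ∈ m := by
      intro m hm h1 h2
      obtain ⟨x, hx⟩ := hInt ℓ hℓ m hm
      rw [Finset.mem_inter] at hx
      rcases hcovℓ x hx.1 with rfl | rfl | rfl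
      · exact hx.2
      · exact absurd hx.2 h1
      · exact absurd hx.2 h2
    have ha0ℓ0 : a0 ∈ ℓ0 := hmem ℓ0 hℓ0L ha1ℓ0 ha2ℓ0
    have ha1ℓ1 : a1 ∈ ℓ1 := by
      obtain ⟨x, hx⟩ := hInt ℓ hℓ ℓ1 hℓ1L
      rw [Finset.mem_inter] at hx
      rcases hcovℓ x hx.1 with rfl | rfl | rfl
      · exact absurd hx.2 ha0ℓ1
      · exact hx.2
      · exact absurd hx.2 ha2ℓ1
    have ha2ℓ2 : a2 ∈ ℓ2 := by
      obtain ⟨x, hx⟩ := hInt ℓ hℓ ℓ2 hℓ2L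
      rw [Finset.mem_inter] at hx
      rcases hcovℓ x hx.1 with rfl | rfl | rfl
      · exact absurd hx.2 ha0ℓ2
      · exact absurd hx.2 ha1ℓ2
      · exact hx.2
    -- p = ℓ0 ∩ ℓ1 lies in X 2
    obtain ⟨p, hp⟩ := hInt ℓ0 hℓ0L ℓ1 hℓ1L
    rw [Finset.mem_inter] at hp
    have hpX : p ∈ X 2 := by
      obtain ⟨i, hi, -⟩ := hX1 p
      fin_cases i
      · exact absurd (hsame ℓ0 hℓ0L p hp.1 a0 ha0ℓ0 0 hi ha0X ▸ hp.2) ha0ℓ1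
      · exact absurd (hsame ℓ1 hℓ1L p hp.2 a1 ha1ℓ1 1 hi ha1X ▸ hp.1) ha1ℓ0
      · exact hi
    -- q = ℓ0 ∩ ℓ2 lies in X 1
    obtain ⟨q, hq⟩ := hInt ℓ0 hℓ0L ℓ2 hℓ2L
    rw [Finset.mem_inter] at hq
    have hqX : q ∈ X 1 := by
      obtain ⟨i, hi, -⟩ := hX1 q
      fin_cases i
      · exact absurd (hsame ℓ0 hℓ0L q hq.1 a0 ha0ℓ0 0 hi ha0X ▸ hq.2) ha0ℓ2
      · exact hi
      · exact absurd (hsame ℓ2 hℓ2L q hq.2 a2 ha2ℓ2 2 hi ha2X ▸ hq.1) ha2ℓ0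
    -- r = ℓ1 ∩ ℓ2 lies in X 0
    obtain ⟨r, hr⟩ := hInt ℓ1 hℓ1L ℓ2 hℓ2L
    rw [Finset.mem_inter] at hr
    have hrX : r ∈ X 0 := by
      obtain ⟨i, hi, -⟩ := hX1 r
      fin_cases i
      · exact hi
      · exact absurd (hsame ℓ1 hℓ1L r hr.1 a1 ha1ℓ1 1 hi ha1X ▸ hr.2) ha1ℓ2
      · exact absurd (hsame ℓ2 hℓ2L r hr.2 a2 ha2ℓ2 2 hi ha2X ▸ hr.1) ha2ℓ1
    refine ⟨{p, a2}, hcard2 _ _, ?_⟩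
    intro m hm
    by_contra hne
    have hpm : p ∉ m := fun h => hne ⟨p, Finset.mem_inter.mpr ⟨by simp, h⟩⟩
    have ha2nm : a2 ∉ m := fun h => hne ⟨a2, Finset.mem_inter.mpr ⟨by simp, h⟩⟩
    -- y ∈ m ∩ ℓ0
    obtain ⟨y, hy⟩ := hInt m hm ℓ0 hℓ0L
    rw [Finset.mem_inter] at hy
    have hy' : y = a0 ∨ y = q := by
      rcases hcov ℓ0 hℓ0L a0 q p ha0ℓ0 ha0X hq.1 hqX hp.1 hpX y hy.2 with h | h | h
      · exact Or.inl h
      · exact Or.inr h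
      · exact absurd (h ▸ hy.1) hpm
    -- z ∈ m ∩ ℓ1
    obtain ⟨z, hz⟩ := hInt m hm ℓ1 hℓ1L
    rw [Finset.mem_inter] at hz
    have hz' : z = r ∨ z = a1 := by
      rcases hcov ℓ1 hℓ1L r a1 p hr.1 hrX ha1ℓ1 ha1X hp.2 hpX z hz.2 with h | h | h
      · exact Or.inl h
      · exact Or.inr h
      · exact absurd (h ▸ hz.1) hpm
    have two_le : ∀ (n : Finset Q), n ∈ L → ∀ u v : Q, u ∈ m → u ∈ n → v ∈ m →
        v ∈ n → u ≠ v → m = n := by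
      intro n hn u v hum hun hvm hvn huv
      by_contra hmn
      have h1 := hLin m hm n hn hmn
      have h2 : 1 < (m ∩ n).card :=
        Finset.one_lt_card.mpr ⟨u, Finset.mem_inter.mpr ⟨hum, hun⟩,
          v, Finset.mem_inter.mpr ⟨hvm, hvn⟩, huv⟩
      omega
    rcases hy' with rfl | rfl <;> rcases hz' with rfl | rfl
    · -- y = a0, z = r : same side X 0
      exact ha0ℓ2 ((hsame m hm y hy.1 z hz.1 0 ha0X hrX) ▸ hr.2)
    · -- y = a0, z = a1 : both on ℓ, but m ≠ ℓ
      have hne01 : y ≠ z := fun h => by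
        have := hsx y 0 1 ha0X (h ▸ ha1X); simp at this
      have heq := two_le ℓ hℓ y z hy.1 ha0m hz.1 ha1m hne01
      rw [heq] at hpm ha2nm
      exact ha2nm ha2m
    · -- y = q, z = r : both on ℓ2
      have hne : y ≠ z := fun h => by
        have := hsx y 1 0 hqX (h ▸ hrX); simp at this
      have heq := two_le ℓ2 hℓ2L y z hy.1 hq.2 hz.1 hr.2 hne
      rw [heq] at ha2nm
      exact ha2nm ha2ℓ2
    · -- y = q, z = a1 : same side X 1
      exact ha1ℓ0 ((hsame m hm z hz.1 y hy.1 1 ha1X hqX) ▸ hy.2)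
  refine ⟨?_, ?_, ?_⟩
  · intro Q _ _ L h1 h2 h3
    obtain ⟨T, hT, hTr⟩ := key Q L h1 h2 h3
    exact le_trans (Nat.sInf_le ⟨T, rfl, hTr⟩) hT
  · intro Q _ _ L hLin hInt hPar htau
    by_contra hcard
    push_neg at hcard
    -- τ ≤ 1 : find a point on all lines
    have : tau L ≤ 1 := by
      by_cases hL : L = ∅
      · have : tau L ≤ 0 := Nat.sInf_le ⟨∅, by simp, fun m hm => by simp [hL] at hm⟩
        omega
      obtain ⟨ℓ, hℓ⟩ := Finset.nonempty_iff_ne_empty.mpr hL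
      by_cases h2 : ∃ m ∈ L, m ≠ ℓ
      · obtain ⟨m, hm, hmℓ⟩ := h2
        have hsub : ({ℓ, m} : Finset (Finset Q)) ⊆ L := by
          intro n hn
          rcases Finset.mem_insert.mp hn with rfl | hn
          · exact hℓ
          · exact (Finset.mem_singleton.mp hn) ▸ hm
        have hcard2 : ({ℓ, m} : Finset (Finset Q)).card = 2 := by
          rw [Finset.card_insert_of_notMem (by simp [hmℓ.symm]), Finset.card_singleton]
        have hLeq : L = {ℓ, m} :=
          (Finset.eq_of_subset_of_card_le hsub (by omega)).symm
        obtain ⟨x, hx⟩ := hInt ℓ hℓ m hm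
        rw [Finset.mem_inter] at hx
        refine Nat.sInf_le ⟨{x}, Finset.card_singleton x, ?_⟩
        intro n hn
        rw [hLeq] at hn
        rcases Finset.mem_insert.mp hn with rfl | hn
        · exact ⟨x, Finset.mem_inter.mpr ⟨Finset.mem_singleton_self x, hx.1⟩⟩
        · exact ⟨x, Finset.mem_inter.mpr
            ⟨Finset.mem_singleton_self x, (Finset.mem_singleton.mp hn) ▸ hx.2⟩⟩
      · push_neg at h2
        obtain ⟨x, hx⟩ := hInt ℓ hℓ ℓ hℓ
        rw [Finset.mem_inter] at hx
        refine Nat.sInf_le ⟨{x}, Finset.card_singleton x, ?_⟩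
        intro n hn
        rw [h2 n hn]
        exact ⟨x, Finset.mem_inter.mpr ⟨Finset.mem_singleton_self x, hx.1⟩⟩
    omega
  · refine ⟨{{0, 3, 6}, {0, 4, 7}, {1, 3, 7}}, by unfold Linear; decide, by unfold Intersecting; decide, ?_, ?_, by decide⟩
    · exact ⟨![{0, 1, 2}, {3, 4, 5}, {6, 7, 8}], by unfold ExistsUnique; decide, by decide⟩
    · have h2 : 2 ∈ {n | ∃ T : Finset (Fin 9), T.card = n ∧
          IsTransversal {{0, 3, 6}, {0, 4, 7}, {1, 3, 7}} T} :=
        ⟨{0, 3}, by decide, by unfold IsTransversal; decide⟩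
      refine le_antisymm (Nat.sInf_le h2) (le_csInf ⟨2, h2⟩ ?_)
      rintro n ⟨T, hcard, hTr⟩
      by_contra hlt
      push_neg at hlt
      obtain ⟨x, hx⟩ := hTr {0, 3, 6} (by decide)
      obtain ⟨y, hy⟩ := hTr {0, 4, 7} (by decide)
      obtain ⟨z, hz⟩ := hTr {1, 3, 7} (by decide)
      rw [Finset.mem_inter] at hx hy hz
      have hc : T.card ≤ 1 := by omega
      have hxy : x = y := by
        by_contra h
        have := Finset.one_lt_card.mpr ⟨x, hx.1, y, hy.1, h⟩
        omega
      have hxz : x = z := by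
        by_contra h
        have := Finset.one_lt_card.mpr ⟨x, hx.1, z, hz.1, h⟩
        omega
      have h1 := hx.2
      have h2 := hxy ▸ hy.2
      have h3 := hxz ▸ hz.2
      have hall : ∀ w : Fin 9, w ∈ ({0, 3, 6} : Finset (Fin 9)) →
          w ∈ ({0, 4, 7} : Finset (Fin 9)) → w ∈ ({1, 3, 7} : Finset (Fin 9)) → False := by
        decide
      exact hall x h1 h2 h3
end
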